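/- Let A ≥ 0 and C₁ > 0. There exists C₂ > 0 such that for all k, ℓ, m ∈ ℤⁿ: if |(1+|k|)^A k − (1+|m|)^A (ℓ + m)| ≤ C₁ ((1+|k|)^A + (1+|m|)^A), then |k − m| ≤ C₂ (1 + |ℓ|). -/

import Mathlib

/-!
Write `⟨x⟩ = 1 + ‖x‖`. The heart of the matter is the lower bound
`(⟨x⟩^A + ⟨y⟩^A) ‖x - y‖ ≲ ‖⟨x⟩^A x - ⟨y⟩^A y‖`, proved for `‖y‖ ≤ ‖x‖` in two regimes.
If `‖y‖ ≤ ‖x‖ / 2`, the reverse triangle inequality already gives `‖⟨x⟩^A x - ⟨y⟩^A y‖ ≥ ⟨x⟩^A ‖x‖ / 2`.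
Otherwise `⟨x⟩ ≤ 2 ⟨y⟩`, so the two weights are comparable, and writing
`a x - b y = b (x - y) + (a - b) x` with `⟪x - y, x⟫ ≥ 0` shows `‖a x - b y‖ ≥ b ‖x - y‖`.
The theorem follows by inserting `⟨m⟩^A ℓ` and applying the triangle inequality.
-/

noncomputable def toE {n : ℕ} (k : Fin n → ℤ) : EuclideanSpace ℝ (Fin n) := WithLp.toLp 2 (fun i => (k i : ℝ))

open scoped RealInnerProductSpace

theorem add_mul_norm_sub_le_of_two_mul_norm_le {E : Type*} [SeminormedAddCommGroup E]
    [NormedSpace ℝ E] {x y : E} {a b : ℝ} (hb : 0 ≤ b) (hab : b ≤ a) (hxy : 2 * ‖y‖ ≤ ‖x‖) :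
    (a + b) * ‖x - y‖ ≤ 6 * ‖a • x - b • y‖ := by
  have ha : 0 ≤ a := hb.trans hab
  have hby : b * ‖y‖ ≤ a * (‖x‖ / 2) := mul_le_mul hab (by linarith) (norm_nonneg y) ha
  have hlow : a * ‖x‖ - b * ‖y‖ ≤ ‖a • x - b • y‖ := by
    simpa [norm_smul, abs_of_nonneg ha, abs_of_nonneg hb] using norm_sub_norm_le (a • x) (b • y)
  calc (a + b) * ‖x - y‖ ≤ (2 * a) * (3 / 2 * ‖x‖) := by
        gcongr
        · linarith
        · linarith [norm_sub_le x y]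
    _ ≤ 6 * (a * ‖x‖ - b * ‖y‖) := by linarith
    _ ≤ 6 * ‖a • x - b • y‖ := by gcongr

section InnerProductSpace

variable {F : Type*} [NormedAddCommGroup F] [InnerProductSpace ℝ F]

theorem norm_le_norm_add_of_inner_nonneg {u v : F} (h : 0 ≤ ⟪u, v⟫) : ‖u‖ ≤ ‖u + v‖ := by
  refine (sq_le_sq₀ (norm_nonneg _) (norm_nonneg _)).1 ?_
  rw [norm_add_sq_real]
  nlinarith [sq_nonneg ‖v‖]

theorem real_inner_sub_nonneg_of_norm_le {x y : F} (hxy : ‖y‖ ≤ ‖x‖) : 0 ≤ ⟪x - y, x⟫ := by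
  rw [inner_sub_left, real_inner_self_eq_norm_sq]
  nlinarith [real_inner_le_norm y x, norm_nonneg y]

theorem mul_norm_sub_le_norm_smul_sub_smul {x y : F} {a b : ℝ} (hb : 0 ≤ b) (hab : b ≤ a)
    (hxy : ‖y‖ ≤ ‖x‖) : b * ‖x - y‖ ≤ ‖a • x - b • y‖ := by
  have hsplit : a • x - b • y = b • (x - y) + (a - b) • x := by module
  rw [hsplit, ← Real.norm_of_nonneg hb, ← norm_smul, Real.norm_of_nonneg hb]
  apply norm_le_norm_add_of_inner_nonneg
  rw [real_inner_smul_left, real_inner_smul_right]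
  exact mul_nonneg hb (mul_nonneg (sub_nonneg.2 hab) (real_inner_sub_nonneg_of_norm_le hxy))

theorem add_mul_norm_sub_le_of_le_mul {x y : F} {a b c : ℝ} (hb : 0 < b) (hab : b ≤ a)
    (hac : a ≤ c * b) (hxy : ‖y‖ ≤ ‖x‖) : (a + b) * ‖x - y‖ ≤ (c + 1) * ‖a • x - b • y‖ := by
  have h := mul_norm_sub_le_norm_smul_sub_smul hb.le hab hxy
  have hc : 0 ≤ c + 1 := by nlinarith
  calc (a + b) * ‖x - y‖ ≤ (c + 1) * (b * ‖x - y‖) := by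
        nlinarith [mul_le_mul_of_nonneg_right hac (norm_nonneg (x - y))]
    _ ≤ (c + 1) * ‖a • x - b • y‖ := mul_le_mul_of_nonneg_left h hc

end InnerProductSpace

section Weighted

variable {F : Type*} [NormedAddCommGroup F] [InnerProductSpace ℝ F] {A : ℝ}

theorem add_rpow_mul_norm_sub_le_of_norm_le (hA : 0 ≤ A) {x y : F} (hxy : ‖y‖ ≤ ‖x‖) :
    ((1 + ‖x‖) ^ A + (1 + ‖y‖) ^ A) * ‖x - y‖
      ≤ 6 * 2 ^ A * ‖(1 + ‖x‖) ^ A • x - (1 + ‖y‖) ^ A • y‖ := by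
  set a := (1 + ‖x‖) ^ A
  set b := (1 + ‖y‖) ^ A
  have hb : 0 < b := by positivity
  have hab : b ≤ a := Real.rpow_le_rpow (by positivity) (by linarith) hA
  have h2A : (1 : ℝ) ≤ 2 ^ A := Real.one_le_rpow (by norm_num) hA
  rcases le_or_gt (2 * ‖y‖) ‖x‖ with hfar | hnear
  · calc (a + b) * ‖x - y‖ ≤ 6 * ‖a • x - b • y‖ :=
          add_mul_norm_sub_le_of_two_mul_norm_le hb.le hab hfar
      _ ≤ 6 * 2 ^ A * ‖a • x - b • y‖ := by gcongr; linarith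
  · have hcomp : a ≤ 2 ^ A * b := by
      rw [← Real.mul_rpow (by norm_num) (by positivity)]
      exact Real.rpow_le_rpow (by positivity) (by linarith) hA
    calc (a + b) * ‖x - y‖ ≤ (2 ^ A + 1) * ‖a • x - b • y‖ :=
          add_mul_norm_sub_le_of_le_mul hb hab hcomp hxy
      _ ≤ 6 * 2 ^ A * ‖a • x - b • y‖ := by gcongr; linarith

theorem add_rpow_mul_norm_sub_le (hA : 0 ≤ A) (x y : F) :
    ((1 + ‖x‖) ^ A + (1 + ‖y‖) ^ A) * ‖x - y‖
      ≤ 6 * 2 ^ A * ‖(1 + ‖x‖) ^ A • x - (1 + ‖y‖) ^ A • y‖ := by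
  rcases le_total ‖y‖ ‖x‖ with hxy | hyx
  · exact add_rpow_mul_norm_sub_le_of_norm_le hA hxy
  · have h := add_rpow_mul_norm_sub_le_of_norm_le hA hyx
    rwa [add_comm, norm_sub_rev, norm_sub_rev (_ • y)] at h

theorem norm_sub_le_of_norm_rpow_smul_sub_le (hA : 0 ≤ A) {C : ℝ} (hC : 0 ≤ C) {x y z : F}
    (h : ‖(1 + ‖x‖) ^ A • x - (1 + ‖y‖) ^ A • (z + y)‖ ≤ C * ((1 + ‖x‖) ^ A + (1 + ‖y‖) ^ A)) :
    ‖x - y‖ ≤ 6 * 2 ^ A * (C + 1) * (1 + ‖z‖) := by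
  set a := (1 + ‖x‖) ^ A
  set b := (1 + ‖y‖) ^ A
  have ha : 0 < a := by positivity
  have hb : 0 < b := by positivity
  have hupper : ‖a • x - b • y‖ ≤ C * (a + b) + b * ‖z‖ :=
    calc ‖a • x - b • y‖ = ‖(a • x - b • (z + y)) + b • z‖ := by congr 1; module
      _ ≤ ‖a • x - b • (z + y)‖ + ‖b • z‖ := norm_add_le _ _
      _ = ‖a • x - b • (z + y)‖ + b * ‖z‖ := by rw [norm_smul, Real.norm_of_nonneg hb.le]
      _ ≤ C * (a + b) + b * ‖z‖ := add_le_add_left h _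
  refine le_of_mul_le_mul_left ?_ (add_pos ha hb)
  calc (a + b) * ‖x - y‖ ≤ 6 * 2 ^ A * ‖a • x - b • y‖ := add_rpow_mul_norm_sub_le hA x y
    _ ≤ 6 * 2 ^ A * ((C + 1) * (a + b) * (1 + ‖z‖)) := by
        gcongr
        nlinarith [mul_nonneg hC (norm_nonneg z), mul_nonneg ha.le (norm_nonneg z)]
    _ = (a + b) * (6 * 2 ^ A * (C + 1) * (1 + ‖z‖)) := by ring

end Weighted

theorem stmt6 (n : ℕ) (A C₁ : ℝ) (hA : 0 ≤ A) (hC₁ : 0 < C₁) :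
    ∃ C₂ > (0 : ℝ), ∀ k ℓ m : Fin n → ℤ,
      ‖(1 + ‖toE k‖) ^ A • toE k - (1 + ‖toE m‖) ^ A • (toE ℓ + toE m)‖
          ≤ C₁ * ((1 + ‖toE k‖) ^ A + (1 + ‖toE m‖) ^ A) →
      ‖toE k - toE m‖ ≤ C₂ * (1 + ‖toE ℓ‖) :=
  ⟨6 * 2 ^ A * (C₁ + 1), by positivity,
    fun _ _ _ h => norm_sub_le_of_norm_rpow_smul_sub_le hA hC₁.le h⟩
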